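/- arXiv:math/0006087 — 3 statements merged into one kernel-verified Lean document; each statement's English description precedes it below -/
import Mathlib

section
/- Let α be a finite type with decidable equality, let σ be a permutation of α, and let a, b ∈ α be points not lying in the same cycle of σ (¬ σ.SameCycle a b; in particular a ≠ b). Let i be the cardinality of the σ-orbit of a and j the cardinality of the σ-orbit of b (so a fixed point has orbit size 1). Then the full cycle type satisfies the multiset identity ct(swap a b * σ) + {i, j} = ct(σ) + {i + j}; i.e. multiplying σ by the transposition (a b) merges the two cycles containing a and b into a single cycle of length i + j and leaves all other cycles unchanged. -/
open scoped Classical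

/-- The full cycle type of a permutation: the multiset of cardinalities of all
orbits, i.e. `cycleType` together with one part `1` for each fixed point. -/
noncomputable def fullCycleType {α : Type*} [Fintype α] [DecidableEq α]
    (σ : Equiv.Perm α) : Multiset ℕ :=
  σ.cycleType + Multiset.replicate (Finset.univ.filter fun a => σ a = a).card 1

/-- The cardinality of the orbit of `a` under `σ` (a fixed point has orbit size 1). -/
noncomputable def orbitSize {α : Type*} [Fintype α] [DecidableEq α]
    (σ : Equiv.Perm α) (a : α) : ℕ :=
  (Finset.univ.filter fun b => σ.SameCycle a b).card

/-!
Listing the orbit size of every point turns the full cycle type into the multiset in which each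
part `k` is repeated `k` times, and this operation is injective on multisets of positive integers.
So it suffices to compare orbit sizes point by point. Multiplying by `swap a b` does not change
the orbits avoiding `a` and `b`, and fuses the orbits of `a` and `b`: walking from `a` along `σ`,
the only step that `swap a b * σ` changes is the last one, into `a`, which it redirects to `b`.
-/

namespace Equiv.Perm

variable {α : Type*} {f g : Perm α} {a b x y : α}

theorem SameCycle.induction [Finite α] {P : α → Prop} (hxy : f.SameCycle x y) (hx : P x)
    (hstep : ∀ z, f.SameCycle x z → P z → P (f z)) : P y := by
  obtain ⟨n, rfl⟩ := hxy.exists_nat_pow_eq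
  clear hxy
  induction n with
  | zero => exact hx
  | succ n ih =>
    rw [pow_succ', mul_apply]
    exact hstep _ (sameCycle_pow_right.2 SameCycle.rfl) ih

theorem sameCycle_iff_of_eqOn [Finite α] (hfg : ∀ z, f.SameCycle x z → g z = f z) :
    g.SameCycle x y ↔ f.SameCycle x y := by
  constructor
  · intro h
    refine h.induction SameCycle.rfl fun z _ hz => ?_
    rw [hfg z hz]
    exact sameCycle_apply_right.2 hz
  · intro h
    refine h.induction SameCycle.rfl fun z hz hgz => ?_
    rw [← hfg z hz]
    exact sameCycle_apply_right.2 hgz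

variable [DecidableEq α]

theorem SameCycle.sameCycle_swap_apply (hab : f.SameCycle a b) (x : α) :
    f.SameCycle x (swap a b x) := by
  rw [swap_apply_def]
  split_ifs with hxa hxb
  · exact hxa ▸ hab
  · exact hxb ▸ hab.symm
  · exact SameCycle.rfl

theorem SameCycle.of_swap_mul [Finite α] (hab : f.SameCycle a b)
    (h : (swap a b * f).SameCycle x y) : f.SameCycle x y :=
  h.induction SameCycle.rfl fun z _ hz =>
    (sameCycle_apply_right.2 hz).trans (hab.sameCycle_swap_apply (f z))

theorem swap_mul_sameCycle_of_not_sameCycle [Finite α] (h : ¬ f.SameCycle a b) :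
    (swap a b * f).SameCycle a b := by
  have hpred : (swap a b * f).SameCycle a (f.symm a) := by
    refine (sameCycle_symm_apply_right.2 SameCycle.rfl).induction
      SameCycle.rfl fun z haz hz => ?_
    by_cases hza : f z = a
    · rw [hza]
    have hzb : f z ≠ b := fun hzb => h (hzb ▸ sameCycle_apply_right.2 haz)
    have : (swap a b * f) z = f z := swap_apply_of_ne_of_ne hza hzb
    exact this ▸ sameCycle_apply_right.2 hz
  have hb : (swap a b * f) (f.symm a) = b := by simp
  simpa only [hb] using sameCycle_apply_right.2 hpred

theorem SameCycle.swap_mul [Finite α] (h : ¬ f.SameCycle a b) (hxy : f.SameCycle x y) :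
    (swap a b * f).SameCycle x y :=
  (swap_mul_sameCycle_of_not_sameCycle h).of_swap_mul (by rwa [swap_mul_self_mul])

theorem sameCycle_swap_mul_iff_of_not_sameCycle [Finite α] (hxa : ¬ f.SameCycle x a)
    (hxb : ¬ f.SameCycle x b) : (swap a b * f).SameCycle x y ↔ f.SameCycle x y :=
  sameCycle_iff_of_eqOn fun _ hz => swap_apply_of_ne_of_ne
    (fun hza => hxa (hza ▸ sameCycle_apply_right.2 hz))
    (fun hzb => hxb (hzb ▸ sameCycle_apply_right.2 hz))

theorem sameCycle_swap_mul_left_iff [Finite α] (h : ¬ f.SameCycle a b) :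
    (swap a b * f).SameCycle a y ↔ f.SameCycle a y ∨ f.SameCycle b y := by
  constructor
  · intro hy
    by_contra! hy'
    have hya : ¬ f.SameCycle y a := fun hya => hy'.1 hya.symm
    have hyb : ¬ f.SameCycle y b := fun hyb => hy'.2 hyb.symm
    exact hya ((sameCycle_swap_mul_iff_of_not_sameCycle hya hyb).1 hy.symm)
  · rintro (hy | hy)
    · exact hy.swap_mul h
    · exact (swap_mul_sameCycle_of_not_sameCycle h).trans (hy.swap_mul h)

variable [Fintype α]

theorem pairwiseDisjoint_support_cycleFactorsFinset (σ : Perm α) :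
    (σ.cycleFactorsFinset : Set (Perm α)).PairwiseDisjoint support :=
  fun _ hc _ hd hcd => (cycleFactorsFinset_pairwise_disjoint σ hc hd hcd).disjoint_support

theorem support_eq_disjiUnion_cycleFactorsFinset (σ : Perm α) :
    σ.support = σ.cycleFactorsFinset.disjiUnion support
      (pairwiseDisjoint_support_cycleFactorsFinset σ) := by
  ext x
  simp only [Finset.mem_disjiUnion]
  refine ⟨fun hx => ⟨σ.cycleOf x, cycleOf_mem_cycleFactorsFinset_iff.2 hx, ?_⟩, ?_⟩
  · exact mem_support_cycleOf_iff.2 ⟨SameCycle.rfl, hx⟩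
  · rintro ⟨c, hc, hx⟩
    exact mem_cycleFactorsFinset_support_le hc hx

end Equiv.Perm

namespace Multiset

theorem count_bind_replicate_self (s : Multiset ℕ) (n : ℕ) :
    count n (s.bind fun k => replicate k k) = n * count n s := by
  induction s using Multiset.induction_on with
  | empty => simp
  | cons k s ih =>
    rw [cons_bind, count_add, ih, count_replicate, count_cons]
    by_cases hk : n = k
    · simp [hk, mul_add, add_comm]
    · simp [hk, Ne.symm hk]

theorem eq_of_bind_replicate_self_eq {s t : Multiset ℕ} (hs : 0 ∉ s) (ht : 0 ∉ t)
    (h : (s.bind fun k => replicate k k) = t.bind fun k => replicate k k) : s = t := by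
  ext n
  rcases Nat.eq_zero_or_pos n with rfl | hn
  · rw [count_eq_zero.2 hs, count_eq_zero.2 ht]
  · have := congr_arg (count n) h
    rwa [count_bind_replicate_self, count_bind_replicate_self,
      Nat.mul_left_cancel_iff hn] at this

end Multiset

section

open Equiv Equiv.Perm Finset

variable {α : Type*} [Fintype α] [DecidableEq α] {σ c : Perm α} {a b x y : α}

theorem zero_notMem_fullCycleType (σ : Perm α) : 0 ∉ fullCycleType σ := by
  rw [fullCycleType, Multiset.mem_add, not_or]
  exact ⟨fun h0 => by simpa using two_le_of_mem_cycleType h0,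
    fun h0 => by simpa using Multiset.eq_of_mem_replicate h0⟩

theorem Equiv.Perm.SameCycle.orbitSize_eq (h : σ.SameCycle x y) :
    orbitSize σ x = orbitSize σ y := by
  unfold orbitSize
  congr 1
  ext z
  simp only [mem_filter, mem_univ, true_and]
  exact ⟨h.symm.trans, h.trans⟩

theorem orbitSize_pos (σ : Perm α) (x : α) : 0 < orbitSize σ x :=
  card_pos.2 ⟨x, mem_filter.2 ⟨mem_univ x, SameCycle.rfl⟩⟩

theorem orbitSize_of_apply_eq_self (hx : σ x = x) : orbitSize σ x = 1 := by
  rw [orbitSize, card_eq_one]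
  refine ⟨x, ?_⟩
  ext y
  simp only [mem_filter, mem_univ, true_and, mem_singleton]
  exact ⟨fun h => (h.eq_of_left hx).symm, fun h => h ▸ SameCycle.rfl⟩

theorem orbitSize_eq_card_support_cycleOf (hx : x ∈ σ.support) :
    orbitSize σ x = #(σ.cycleOf x).support := by
  unfold orbitSize
  congr 1
  ext y
  rw [mem_filter, mem_support_cycleOf_iff]
  simp [hx]

theorem orbitSize_swap_mul_self (h : ¬ σ.SameCycle a b) :
    orbitSize (swap a b * σ) a = orbitSize σ a + orbitSize σ b := by
  rw [orbitSize, orbitSize, orbitSize, ← card_union_of_disjoint, ← filter_or]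
  · congr 1
    exact filter_congr fun y _ => sameCycle_swap_mul_left_iff h
  · exact disjoint_filter.2 fun y _ hay hby => h (hay.trans hby.symm)

theorem orbitSize_swap_mul_of_not_sameCycle (hxa : ¬ σ.SameCycle x a)
    (hxb : ¬ σ.SameCycle x b) : orbitSize (swap a b * σ) x = orbitSize σ x := by
  unfold orbitSize
  congr 1
  exact filter_congr fun y _ => sameCycle_swap_mul_iff_of_not_sameCycle hxa hxb

theorem map_orbitSize_filter_sameCycle (σ : Perm α) (x : α) :
    (univ.val.filter (σ.SameCycle x)).map (orbitSize σ) =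
      Multiset.replicate (orbitSize σ x) (orbitSize σ x) := by
  refine Multiset.eq_replicate.2 ⟨by rw [Multiset.card_map]; rfl, fun n hn => ?_⟩
  obtain ⟨y, hy, rfl⟩ := Multiset.mem_map.1 hn
  exact (Multiset.mem_filter.1 hy).2.orbitSize_eq.symm

theorem map_orbitSize_support_of_mem_cycleFactorsFinset (hc : c ∈ σ.cycleFactorsFinset) :
    c.support.val.map (orbitSize σ) = Multiset.replicate #c.support #c.support := by
  refine Multiset.eq_replicate.2 ⟨by simp, fun n hn => ?_⟩
  obtain ⟨x, hx, rfl⟩ := Multiset.mem_map.1 hn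
  rw [orbitSize_eq_card_support_cycleOf (mem_cycleFactorsFinset_support_le hc hx),
    ← cycle_is_cycleOf hx hc]

theorem map_orbitSize_support (σ : Perm α) :
    σ.support.val.map (orbitSize σ) = σ.cycleType.bind fun k => Multiset.replicate k k := by
  rw [support_eq_disjiUnion_cycleFactorsFinset, disjiUnion_val, Multiset.map_bind, cycleType_def,
    Multiset.bind_map]
  exact Multiset.bind_congr fun c hc => map_orbitSize_support_of_mem_cycleFactorsFinset hc

theorem map_orbitSize_filter_apply_eq_self (σ : Perm α) :
    (univ.val.filter fun x => σ x = x).map (orbitSize σ) =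
      Multiset.replicate #(univ.filter fun x => σ x = x) 1 := by
  refine Multiset.eq_replicate.2 ⟨by rw [Multiset.card_map]; rfl, fun n hn => ?_⟩
  obtain ⟨x, hx, rfl⟩ := Multiset.mem_map.1 hn
  exact orbitSize_of_apply_eq_self (Multiset.mem_filter.1 hx).2

theorem map_orbitSize_univ (σ : Perm α) :
    univ.val.map (orbitSize σ) = (fullCycleType σ).bind fun k => Multiset.replicate k k := by
  rw [← Multiset.filter_add_not (fun x => σ x ≠ x) univ.val, Multiset.map_add]
  simp only [not_not]
  rw [map_orbitSize_filter_apply_eq_self, fullCycleType, Multiset.add_bind]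
  congr 1
  · exact map_orbitSize_support σ
  · simp [Multiset.bind, Multiset.join, Multiset.nsmul_singleton]

theorem map_orbitSize_univ_swap_mul (h : ¬ σ.SameCycle a b) :
    univ.val.map (orbitSize (swap a b * σ)) +
        (Multiset.replicate (orbitSize σ a) (orbitSize σ a) +
          Multiset.replicate (orbitSize σ b) (orbitSize σ b)) =
      univ.val.map (orbitSize σ) +
        Multiset.replicate (orbitSize σ a + orbitSize σ b) (orbitSize σ a + orbitSize σ b) := by
  set p : α → Prop := fun y => σ.SameCycle a y ∨ σ.SameCycle b y
  have hsplit (g : Perm α) : univ.val.map (orbitSize g) =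
      (univ.val.filter p).map (orbitSize g) + (univ.val.filter (¬ p ·)).map (orbitSize g) := by
    rw [← Multiset.map_add, Multiset.filter_add_not]
  have hmerged : (univ.val.filter p).map (orbitSize (swap a b * σ)) =
      Multiset.replicate (orbitSize σ a + orbitSize σ b) (orbitSize σ a + orbitSize σ b) := by
    rw [← orbitSize_swap_mul_self h, ← map_orbitSize_filter_sameCycle]
    congr 1
    exact Multiset.filter_congr fun y _ => (sameCycle_swap_mul_left_iff h).symm
  have hparts : (univ.val.filter p).map (orbitSize σ) =
      Multiset.replicate (orbitSize σ a) (orbitSize σ a) +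
        Multiset.replicate (orbitSize σ b) (orbitSize σ b) := by
    have hdisj : univ.val.filter (fun y => σ.SameCycle a y ∧ σ.SameCycle b y) = 0 :=
      Multiset.filter_eq_nil.2 fun y _ hy => h (hy.1.trans hy.2.symm)
    rw [← map_orbitSize_filter_sameCycle, ← map_orbitSize_filter_sameCycle, ← Multiset.map_add,
      Multiset.filter_add_filter, hdisj, add_zero]
  have hrest : (univ.val.filter (¬ p ·)).map (orbitSize (swap a b * σ)) =
      (univ.val.filter (¬ p ·)).map (orbitSize σ) := by
    refine Multiset.map_congr rfl fun x hx => ?_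
    have hx : ¬ p x := (Multiset.mem_filter.1 hx).2
    exact orbitSize_swap_mul_of_not_sameCycle (fun hxa => hx (.inl hxa.symm))
      (fun hxb => hx (.inr hxb.symm))
  rw [hsplit, hsplit σ, hmerged, hparts, hrest]
  abel

end

theorem swap_mul_merges_cycles {α : Type*} [Fintype α] [DecidableEq α]
    (σ : Equiv.Perm α) (a b : α) (h : ¬ σ.SameCycle a b) :
    fullCycleType (Equiv.swap a b * σ) + {orbitSize σ a, orbitSize σ b}
      = fullCycleType σ + {orbitSize σ a + orbitSize σ b} := by
  have hi := orbitSize_pos σ a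
  have hj := orbitSize_pos σ b
  apply Multiset.eq_of_bind_replicate_self_eq
  · simp [zero_notMem_fullCycleType, hi.ne, hj.ne]
  · simpa [zero_notMem_fullCycleType] using (add_pos hi hj).ne
  · rw [Multiset.add_bind, Multiset.add_bind, ← map_orbitSize_univ, ← map_orbitSize_univ,
      Multiset.insert_eq_cons, Multiset.cons_bind, Multiset.singleton_bind,
      Multiset.singleton_bind]
    exact map_orbitSize_univ_swap_mul h
end

section
/- Let α be a finite type with decidable equality, let σ be a permutation of α, let x ∈ α have σ-orbit S of cardinality k ≥ 2, and let 0 < i < k. Then the number of unordered pairs {a, b} of distinct elements of S such that ct(swap a b * σ) + {k} = ct(σ) + {i, k − i} (i.e. such that left multiplication by the transposition (a b) splits the cycle S into cycles of lengths i and k − i) equals k if i ≠ k − i, and equals k/2 if i = k − i (so k is even). -/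
open scoped Classical

/-!
Write the cycle of `σ` through `a` as the list `[a, σ a, …, σ^(k-1) a]` and let `b = σ^j a`.
Cutting this list in front of `b` into `l₁ ++ l₂` gives
`swap a b * formPerm (l₁ ++ l₂) = formPerm l₁ * formPerm l₂`, so left multiplication by
`swap a b` replaces the `k`-cycle by disjoint cycles of lengths `j` and `k - j`. Hence the
splitting pairs are exactly the pairs `{a, σ^i a}` with `a` in the cycle, and the map
`a ↦ {a, σ^i a}` is injective on the cycle unless `2 * i = k`, in which case it is two-to-one.
-/

open Equiv Equiv.Perm Finset

namespace List

variable {α : Type*}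

theorem exists_eq_cons_append_cons (l : List α) {j : ℕ} (hj : 0 < j) (hjl : j < l.length) :
    ∃ t₁ t₂, l = l[0] :: t₁ ++ l[j] :: t₂ ∧ t₁.length + 1 = j := by
  refine ⟨(l.drop 1).take (j - 1), l.drop (j + 1), ?_,
    by simp only [drop_one, length_take, length_tail]; omega⟩
  have h : l.drop j = (l.drop 1).drop (j - 1) := by rw [drop_drop]; congr 1; omega
  rw [cons_append, ← drop_eq_getElem_cons hjl, h, take_append_drop, ← drop_eq_getElem_cons,
    drop_zero]

theorem swap_mul_formPerm_cons_append_cons [DecidableEq α] {x y : α} {l₁ l₂ : List α}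
    (h : (x :: l₁ ++ y :: l₂).Nodup) :
    Equiv.swap x y * formPerm (x :: l₁ ++ y :: l₂)
      = formPerm (x :: l₁) * formPerm (y :: l₂) := by
  induction l₁ generalizing x with
  | nil => simp [formPerm_cons_cons, ← mul_assoc]
  | cons z l₁ ih =>
    obtain ⟨hxy, hxz, hzy⟩ : x ≠ y ∧ x ≠ z ∧ z ≠ y := by
      simp only [cons_append, nodup_cons, mem_cons, mem_append, not_or] at h; tauto
    have hswap : Equiv.swap x y * Equiv.swap x z * Equiv.swap z y = Equiv.swap x z := by
      ext a; simp only [Perm.mul_apply, swap_apply_def]; split_ifs <;> simp_all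
    rw [cons_append, cons_append, formPerm_cons_cons, formPerm_cons_cons, ← cons_append,
      ← swap_mul_self_mul z y (formPerm _), ih h.of_cons]
    simp only [← mul_assoc, hswap]

end List

namespace Equiv.Perm

variable {α : Type*} [DecidableEq α]

theorem IsCycleOn.injOn_pair_pow_apply {g : Perm α} {s : Finset α} (hg : g.IsCycleOn s) {i : ℕ}
    (hi : 0 < i) (his : i < #s) (h2i : 2 * i ≠ #s) :
    Set.InjOn (fun a => ({a, (g ^ i) a} : Finset α)) s := by
  intro p _ q hq (hpq : ({p, (g ^ i) p} : Finset α) = {q, (g ^ i) q})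
  have hp' : p ∈ ({q, (g ^ i) q} : Finset α) := hpq ▸ mem_insert_self _ _
  have hgp : (g ^ i) p ∈ ({q, (g ^ i) q} : Finset α) :=
    hpq ▸ mem_insert_of_mem (mem_singleton_self _)
  simp only [mem_insert, mem_singleton] at hp' hgp
  rcases hp' with rfl | rfl
  · rfl
  rcases hgp with hgq | hgq
  · have hdvd : #s ∣ i + i := by
      rw [← hg.pow_apply_eq (mem_coe.1 hq), pow_add, Perm.mul_apply, hgq]
    exact absurd (Nat.eq_of_dvd_of_lt_two_mul (by omega) hdvd (by omega)) (by omega)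
  · exact (g ^ i).injective hgq

theorem IsCycleOn.two_mul_card_image_pair_pow_apply {g : Perm α} {s : Finset α}
    (hg : g.IsCycleOn s) {i : ℕ} (hi : 0 < i) (h2i : 2 * i = #s) :
    2 * #(s.image fun a => ({a, (g ^ i) a} : Finset α)) = #s := by
  have hmem : ∀ a ∈ s, (g ^ i) a ∈ s := fun a ha => hg.1.mapsTo.perm_pow i (mem_coe.2 ha)
  have hne : ∀ a ∈ s, (g ^ i) a ≠ a := fun a ha h =>
    absurd (Nat.le_of_dvd hi ((hg.pow_apply_eq ha).1 h)) (by omega)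
  have hinv : ∀ a ∈ s, (g ^ i) ((g ^ i) a) = a := fun a ha => by
    rw [← Perm.mul_apply, ← pow_add, hg.pow_apply_eq ha]
    exact ⟨1, by omega⟩
  have hfiber : ∀ a ∈ s,
      {p ∈ s | ({p, (g ^ i) p} : Finset α) = {a, (g ^ i) a}} = {a, (g ^ i) a} := by
    intro a ha
    ext p
    simp only [mem_filter, mem_insert, mem_singleton]
    constructor
    · rintro ⟨-, hp⟩
      simpa [hp] using mem_insert_self p {(g ^ i) p}
    · rintro (rfl | rfl)
      · exact ⟨ha, rfl⟩
      · exact ⟨hmem a ha, by rw [hinv a ha, pair_comm]⟩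
  rw [card_eq_sum_card_image (fun a => ({a, (g ^ i) a} : Finset α)) s,
    sum_congr rfl fun t ht => ?_, sum_const, smul_eq_mul, mul_comm]
  obtain ⟨a, ha, rfl⟩ := mem_image.1 ht
  rw [hfiber a ha, card_pair (hne a ha).symm]

end Equiv.Perm

section

variable {α : Type*} [Fintype α] [DecidableEq α]

theorem fullCycleType_formPerm_mul {l : List α} (hl : l.Nodup) (hl0 : l ≠ []) {τ : Perm α}
    (hτ : ∀ y ∈ l, τ y = y) :
    fullCycleType (l.formPerm * τ) + Multiset.replicate l.length 1
      = fullCycleType τ + {l.length} := by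
  obtain ⟨y, rfl⟩ | hl2 : (∃ y, l = [y]) ∨ 2 ≤ l.length := by
    match l, hl0 with
    | [y], _ => exact .inl ⟨y, rfl⟩
    | _ :: _ :: _, _ => exact .inr (by simp)
  · simp
  have hsupp : l.formPerm.support = l.toFinset :=
    List.support_formPerm_of_nodup l hl (by rintro x rfl; simp at hl2)
  have hdisj : l.formPerm.Disjoint τ := fun y => by
    by_cases hy : y ∈ l
    · exact .inr (hτ y hy)
    · exact .inl (List.formPerm_apply_of_notMem hy)
  have hsub : l.toFinset ⊆ univ.filter fun a => τ a = a := fun y hy => by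
    simpa using hτ y (List.mem_toFinset.1 hy)
  have hfix : (univ.filter fun a => (l.formPerm * τ) a = a)
      = (univ.filter fun a => τ a = a) \ l.toFinset := by
    ext a
    rw [mem_filter, hdisj.mul_apply_eq_iff, ← notMem_support, hsupp, mem_sdiff, mem_filter]
    tauto
  have hlen : l.length ≤ #(univ.filter fun a => τ a = a) := by
    simpa [List.toFinset_card_of_nodup hl] using card_le_card hsub
  rw [fullCycleType, fullCycleType, hdisj.cycleType_mul, (List.isCycle_formPerm hl hl2).cycleType,
    hsupp, hfix, card_sdiff_of_subset hsub, List.toFinset_card_of_nodup hl, add_assoc,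
    ← Multiset.replicate_add, Nat.sub_add_cancel hlen]
  abel

theorem fullCycleType_swap_mul_pow_apply (σ : Perm α) (a : α) {j : ℕ} (hj : 0 < j)
    (hjk : j < #(σ.cycleOf a).support) :
    fullCycleType (swap a ((σ ^ j) a) * σ) + {#(σ.cycleOf a).support}
      = fullCycleType σ + {j, #(σ.cycleOf a).support - j} := by
  set k := #(σ.cycleOf a).support
  have hlen : (σ.toList a).length = k := Perm.length_toList σ a
  obtain ⟨t₁, t₂, hsplit, ht₁⟩ :=
    (σ.toList a).exists_eq_cons_append_cons hj (hlen ▸ hjk)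
  rw [getElem_toList, getElem_toList, pow_zero, Perm.one_apply] at hsplit
  set b := (σ ^ j) a
  set τ := (σ.cycleOf a)⁻¹ * σ
  have hσ : σ = (σ.toList a).formPerm * τ := by rw [formPerm_toList, mul_inv_cancel_left]
  have hτ : ∀ y ∈ σ.toList a, τ y = y := fun y hy => by
    rw [Perm.mul_apply, Perm.inv_eq_iff_eq, (mem_toList_iff.1 hy).1.cycleOf_apply]
  have hnodup := nodup_toList σ a
  have ht₂ : t₂.length + 1 = k - j := by
    have := congrArg List.length hsplit
    simp only [Perm.length_toList, List.cons_append, List.length_cons, List.length_append] at this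
    omega
  rw [hsplit] at hnodup hτ hσ
  have hdisj := List.disjoint_of_nodup_append hnodup
  have hA := fullCycleType_formPerm_mul hnodup (by simp) hτ
  have hC := fullCycleType_formPerm_mul hnodup.of_append_right (by simp)
    fun y hy => hτ y (List.mem_append_right _ hy)
  have hB := fullCycleType_formPerm_mul hnodup.of_append_left (by simp)
    (τ := (b :: t₂).formPerm * τ) fun y hy => by
      rw [Perm.mul_apply, hτ y (List.mem_append_left _ hy),
        List.formPerm_apply_of_notMem (hdisj hy)]
  have hsw : swap a b * σ = (a :: t₁).formPerm * ((b :: t₂).formPerm * τ) := by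
    rw [hσ, ← mul_assoc, List.swap_mul_formPerm_cons_append_cons hnodup, mul_assoc]
  simp only [List.length_append, List.length_cons, ht₁, ht₂] at hA hB hC
  rw [← hσ, Multiset.replicate_add, Nat.add_sub_cancel' hjk.le] at hA
  rw [← hsw] at hB
  apply add_right_cancel (b := Multiset.replicate j 1 + Multiset.replicate (k - j) 1)
  calc fullCycleType (swap a b * σ) + {k} + (.replicate j 1 + .replicate (k - j) 1)
      = fullCycleType (swap a b * σ) + .replicate j 1 + .replicate (k - j) 1 + {k} := by abel
    _ = fullCycleType τ + {k} + ({j} + {k - j}) := by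
      rw [hB, add_right_comm _ ({j} : Multiset ℕ), hC]; abel
    _ = fullCycleType σ + {j, k - j} + (.replicate j 1 + .replicate (k - j) 1) := by
      rw [← hA]; abel

theorem filter_powersetCard_two_swap_mul_eq_image (σ : Perm α) (x : α) {i : ℕ} (hi : 0 < i)
    (hik : i < #(σ.cycleOf x).support) :
    ((σ.cycleOf x).support.powersetCard 2).filter (fun t => ∃ a ∈ t, ∃ b ∈ t, a ≠ b ∧
        fullCycleType (swap a b * σ) + {#(σ.cycleOf x).support}
          = fullCycleType σ + {i, #(σ.cycleOf x).support - i})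
      = (σ.cycleOf x).support.image fun a => {a, (σ ^ i) a} := by
  set S := (σ.cycleOf x).support
  set k := #S
  have hcyc : σ.IsCycleOn S := isCycleOn_support_cycleOf σ x
  have hsplit : ∀ a ∈ S, ∀ n, 0 < n → n < k →
      fullCycleType (swap a ((σ ^ n) a) * σ) + {k} = fullCycleType σ + {n, k - n} := by
    intro a ha n hn hnk
    have hxa : σ.cycleOf a = σ.cycleOf x := (mem_support_cycleOf_iff.1 ha).1.cycleOf_eq.symm
    simpa only [hxa] using fullCycleType_swap_mul_pow_apply σ a hn (by rwa [hxa])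
  ext t
  simp only [mem_filter, mem_powersetCard, mem_image]
  constructor
  · rintro ⟨⟨htS, htc⟩, a, ha, b, hb, hab, heq⟩
    have ht : {a, b} = t :=
      eq_of_subset_of_card_le (insert_subset ha (singleton_subset_iff.2 hb))
        (by rw [htc, card_pair hab])
    obtain ⟨n, hnk, rfl⟩ := hcyc.exists_pow_eq (htS ha) (htS hb)
    have hn : 0 < n := Nat.pos_of_ne_zero (by rintro rfl; exact hab rfl)
    have hni : n ∈ ({i, k - i} : Multiset ℕ) := by
      rw [add_left_cancel (heq.symm.trans (hsplit a (htS ha) n hn hnk))]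
      exact Multiset.mem_cons_self _ _
    rcases Multiset.mem_cons.1 hni with rfl | hni
    · exact ⟨a, htS ha, ht⟩
    · refine ⟨(σ ^ n) a, htS hb, ?_⟩
      rw [← ht, ← Perm.mul_apply, ← pow_add, Multiset.mem_singleton.1 hni,
        Nat.add_sub_cancel' hik.le, hcyc.pow_card_apply (htS ha), pair_comm]
  · rintro ⟨a, ha, rfl⟩
    have hne : a ≠ (σ ^ i) a := fun h =>
      Nat.not_dvd_of_pos_of_lt hi hik ((hcyc.pow_apply_eq ha).1 h.symm)
    exact ⟨⟨insert_subset ha (singleton_subset_iff.2 (hcyc.1.mapsTo.perm_pow i ha)),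
      card_pair hne⟩, a, mem_insert_self _ _, _, mem_insert_of_mem (mem_singleton_self _), hne,
      hsplit a ha i hi hik⟩

end

theorem card_splitting_pairs_general {α : Type*} [Fintype α] [DecidableEq α]
    (σ : Equiv.Perm α) (x : α) (S : Finset α)
    (hS : S = Finset.univ.filter fun b => σ.SameCycle x b)
    (k i : ℕ) (hk : S.card = k) (hi : 0 < i) (hik : i < k) :
    ((S.powersetCard 2).filter (fun t => ∃ a ∈ t, ∃ b ∈ t, a ≠ b ∧
        fullCycleType (Equiv.swap a b * σ) + {k}
          = fullCycleType σ + {i, k - i})).card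
      = if i ≠ k - i then k else k / 2 := by
  have hx : x ∈ σ.support := by
    by_contra hx
    have hSx : S ⊆ {x} := fun y hy => by
      rw [hS, mem_filter] at hy
      exact mem_singleton.2 (hy.2.eq_of_left (notMem_support.1 hx)).symm
    have := card_le_card hSx
    simp only [card_singleton] at this
    omega
  obtain rfl : S = (σ.cycleOf x).support := by
    ext y
    rw [hS, mem_filter, mem_support_cycleOf_iff]
    simp [hx]
  subst hk
  have hcyc : σ.IsCycleOn (σ.cycleOf x).support := isCycleOn_support_cycleOf σ x
  rw [filter_powersetCard_two_swap_mul_eq_image σ x hi hik]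
  split_ifs with h
  · exact card_image_of_injOn (hcyc.injOn_pair_pow_apply hi hik (by omega))
  · have := hcyc.two_mul_card_image_pair_pow_apply hi (by omega)
    omega

theorem card_splitting_pairs {α : Type*} [Fintype α] [DecidableEq α]
    (σ : Equiv.Perm α) (x : α) (S : Finset α)
    (hS : S = Finset.univ.filter fun b => σ.SameCycle x b)
    (k i : ℕ) (hk : S.card = k) (hk2 : 2 ≤ k) (hi : 0 < i) (hik : i < k) :
    ((S.powersetCard 2).filter (fun t => ∃ a ∈ t, ∃ b ∈ t, a ≠ b ∧
        fullCycleType (Equiv.swap a b * σ) + {k}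
          = fullCycleType σ + {i, k - i})).card
      = if i ≠ k - i then k else k / 2 :=
  card_splitting_pairs_general σ x S hS k i hk hi hik
end

section
/- Let m ≥ 1, let q ∈ R = MvPolynomial ℕ+ ℂ, and let N be at least m plus the weighted total degree of q (where the variable p_k has weight k). Then Δ_N(p_m · q) − p_m · Δ_N(q) = m · ( (1/2) Σ_{a=1}^{m−1} p_a p_{m−a} · q + Σ_{k=1}^{N} k · p_{m+k} · (∂q/∂p_k) ). (This is the commutator identity [Δ, a_{−m}] = m L_{−m} between the operator Δ and the Heisenberg creation operator a_{−m} = multiplication by p_m, where L_{−m} is the Virasoro operator of degree m.) -/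
/-!
Since `∂/∂p_i (p_m · f) = p_m · ∂f/∂p_i + δ_{im} f`, the commutator of `p_m` with each summand of
`Δ_N` is a sum of Kronecker deltas: the second-order part gives `i·m·p_{i+m}·∂q/∂p_i` once for
`j = m` and once for `i = m`, and the first-order part gives `m·p_i·p_j·q` for `i + j = m`.
The deltas collapse the double sums, and `m ≤ N` guarantees that `m` and every splitting
`a + (m - a) = m` lie in the summation range.
-/

open MvPolynomial

/-- The polynomial ring `ℂ[p₁, p₂, …]` in variables indexed by the positive integers. -/
abbrev R : Type := MvPolynomial ℕ+ ℂ

/-- The truncated operator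
`Δ_N q = (1/2) Σ_{i,j=1}^N ( i·j·p_{i+j}·∂²q/∂p_i∂p_j + (i+j)·p_i·p_j·∂q/∂p_{i+j} )`. -/
noncomputable def Δ (N : ℕ) (q : R) : R :=
  (1/2 : ℂ) • ∑ i ∈ Finset.Icc 1 N, ∑ j ∈ Finset.Icc 1 N,
    (((i : ℂ) * (j : ℂ)) •
        (X (i + j).toPNat' * pderiv i.toPNat' (pderiv j.toPNat' q))
      + ((i + j : ℕ) : ℂ) •
        (X i.toPNat' * X j.toPNat' * pderiv (i + j).toPNat' q))

/-- The weighted total degree of `q`, where the variable `p_k` has weight `k`. -/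
noncomputable def wdeg (q : R) : ℕ :=
  MvPolynomial.weightedTotalDegree (fun k : ℕ+ => (k : ℕ)) q

open Finset

lemma Nat.toPNat'_inj {i m : ℕ} (hi : 0 < i) (hm : 0 < m) : i.toPNat' = m.toPNat' ↔ i = m := by
  rw [← PNat.coe_inj, PNat.toPNat'_coe hi, PNat.toPNat'_coe hm]

namespace MvPolynomial

variable {σ S : Type*} [CommSemiring S] [DecidableEq σ]

lemma pderiv_X_mul (i m : σ) (q : MvPolynomial σ S) :
    pderiv i (X m * q) = X m * pderiv i q + if i = m then q else 0 := by
  rw [pderiv_mul, pderiv_X, add_comm]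
  split_ifs with h
  · rw [h, Pi.single_eq_same, one_mul]
  · rw [Pi.single_eq_of_ne (Ne.symm h), zero_mul]

lemma pderiv_pderiv_X_mul (i j m : σ) (q : MvPolynomial σ S) :
    pderiv i (pderiv j (X m * q)) = X m * pderiv i (pderiv j q)
      + ((if i = m then pderiv j q else 0) + if j = m then pderiv i q else 0) := by
  rw [pderiv_X_mul, map_add, pderiv_X_mul, apply_ite (pderiv i), map_zero, add_assoc]

end MvPolynomial

lemma Finset.sum_Icc_sum_Icc_ite_add_eq {M : Type*} [AddCommMonoid M] {m N : ℕ} (h : m ≤ N + 1)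
    (f : ℕ → ℕ → M) :
    ∑ i ∈ Icc 1 N, ∑ j ∈ Icc 1 N, (if i + j = m then f i j else 0)
      = ∑ a ∈ Icc 1 (m - 1), f a (m - a) := by
  have inner : ∀ i ∈ Icc 1 N, ∑ j ∈ Icc 1 N, (if i + j = m then f i j else 0)
      = if i ∈ Icc 1 (m - 1) then f i (m - i) else 0 := by
    intro i hi
    rw [mem_Icc] at hi
    calc ∑ j ∈ Icc 1 N, (if i + j = m then f i j else 0)
        = ∑ j ∈ Icc 1 N, (if m - i = j then (if i < m then f i (m - i) else 0) else 0) := by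
          refine sum_congr rfl fun j hj => ?_
          rw [mem_Icc] at hj
          by_cases hij : i + j = m
          · rw [if_pos hij, if_pos (by omega), if_pos (by omega), ← hij, Nat.add_sub_cancel_left]
          · rw [if_neg hij]; split_ifs <;> first | rfl | omega
      _ = if i ∈ Icc 1 (m - 1) then f i (m - i) else 0 := by
          rw [sum_ite_eq]
          by_cases him : i < m
          · rw [if_pos (by rw [mem_Icc]; omega), if_pos him, if_pos (by rw [mem_Icc]; omega)]
          · rw [if_neg him, ite_self, if_neg (by rw [mem_Icc]; omega)]
  rw [sum_congr rfl inner, sum_ite_mem, inter_eq_right.mpr (Icc_subset_Icc le_rfl (by omega))]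

noncomputable def deltaSummand (i j : ℕ) (q : R) : R :=
  ((i : ℂ) * (j : ℂ)) • (X (i + j).toPNat' * pderiv i.toPNat' (pderiv j.toPNat' q))
    + ((i + j : ℕ) : ℂ) • (X i.toPNat' * X j.toPNat' * pderiv (i + j).toPNat' q)

lemma Δ_X_mul_sub_X_mul_Δ (N m : ℕ) (q : R) :
    Δ N (X m.toPNat' * q) - X m.toPNat' * Δ N q
      = (1/2 : ℂ) • ∑ i ∈ Icc 1 N, ∑ j ∈ Icc 1 N,
          (deltaSummand i j (X m.toPNat' * q) - X m.toPNat' * deltaSummand i j q) := by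
  simp only [Δ, mul_smul_comm, ← smul_sub, mul_sum, ← sum_sub_distrib, deltaSummand]

lemma deltaSummand_X_mul_sub_X_mul {i j m : ℕ} (hi : 0 < i) (hj : 0 < j) (hm : 0 < m) (q : R) :
    deltaSummand i j (X m.toPNat' * q) - X m.toPNat' * deltaSummand i j q
      = (if j = m then (m : ℂ) • (i : ℂ) • (X (i + m).toPNat' * pderiv i.toPNat' q) else 0)
        + (if i = m then (m : ℂ) • (j : ℂ) • (X (m + j).toPNat' * pderiv j.toPNat' q) else 0)
        + (if i + j = m then (m : ℂ) • (X i.toPNat' * X j.toPNat' * q) else 0) := by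
  rw [deltaSummand, deltaSummand, pderiv_pderiv_X_mul, pderiv_X_mul]
  simp only [Nat.toPNat'_inj hi hm, Nat.toPNat'_inj hj hm,
    Nat.toPNat'_inj (Nat.add_pos_left hi j) hm]
  split_ifs <;> first
    | omega
    | subst_vars; simp only [smul_eq_C_mul, map_mul, map_natCast, Nat.cast_add, map_add]; ring

theorem delta_comm_creation (m : ℕ) (hm : 1 ≤ m) (q : R) (N : ℕ)
    (hN : m + wdeg q ≤ N) :
    Δ N (X m.toPNat' * q) - X m.toPNat' * Δ N q
      = (m : ℂ) •
          ((1/2 : ℂ) • ∑ a ∈ Finset.Icc 1 (m - 1),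
              X a.toPNat' * X (m - a).toPNat' * q
            + ∑ k ∈ Finset.Icc 1 N,
              (k : ℂ) • (X (m + k).toPNat' * pderiv k.toPNat' q)) := by
  have hmN : m ≤ N := (Nat.le_add_right m _).trans hN
  have hmI : m ∈ Icc 1 N := mem_Icc.mpr ⟨hm, hmN⟩
  rw [Δ_X_mul_sub_X_mul_Δ, sum_congr rfl fun i hi => sum_congr rfl fun j hj =>
    deltaSummand_X_mul_sub_X_mul (mem_Icc.mp hi).1 (mem_Icc.mp hj).1 hm q]
  simp only [sum_add_distrib, sum_ite_irrel, sum_const_zero, sum_ite_eq', hmI, if_true]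
  rw [sum_Icc_sum_Icc_ite_add_eq (by omega), ← smul_sum, ← smul_sum, ← smul_sum,
    sum_congr rfl fun i _ => by rw [add_comm i m]]
  module
end
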